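/- Let γ = (γ₀,…,γₙ) with all |γ_ℓ| < 1, let ε ∈ ℂ with |ε| = 1, and define ω_{γ,ε}(z) = (ε z Ãₙ(z) + B̃ₙ(z))/(ε z Aₙ(z) + Bₙ(z)). Then for all z ∈ 𝔻: ω_{γ,ε}(z) − ρ(z) = ∏_{ℓ=0}^{n}(1 − |γ_ℓ|²) · |Bₙ(z) + ε z Aₙ(z)|² / (|Bₙ(z)|² − |z|² |Aₙ(z)|²) · ε z^{n+1} / (Bₙ(z) + ε z Aₙ(z))². In particular |ω_{γ,ε}(z) − ρ(z)| = r(z), where ρ and r are the center and radius functions of the Schur value region. -/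

import Mathlib

/-!
Each Schur step `(A, B) ↦ (zA + γ̄B, γzA + B)` multiplies the Wronskian `ÃB − AB̃` by
`z(1 − |γ|²)`, so `ÃₙBₙ − AₙB̃ₙ = zⁿ ∏(1 − |γ_ℓ|²)`; it also satisfies
`|B'|² − |A'|² = (1 − |γ|²)(|B|² − |z|²|A|²)`, which keeps `|Bₙ|² − |z|²|Aₙ|²` positive on the
disc and hence `Bₙ + εzAₙ ≠ 0`. Over the common denominator, `ω − ρ` is then an algebraic
consequence of the Wronskian identity and `εε̄ = 1`, and taking norms gives `r(z)`.
-/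

open Complex ComplexConjugate Finset

section SchurStep

variable (g z a b c d : ℂ)

theorem schurStep_wronskian :
    (z * c + conj g * d) * (g * z * a + b) - (z * a + conj g * b) * (g * z * c + d) =
      z * ((1 - ‖g‖ ^ 2 : ℝ) : ℂ) * (c * b - a * d) := by
  push_cast
  rw [← mul_conj']
  ring

theorem schurStep_sq_norm_sub :
    ‖g * z * a + b‖ ^ 2 - ‖z * a + conj g * b‖ ^ 2 =
      (1 - ‖g‖ ^ 2) * (‖b‖ ^ 2 - ‖z‖ ^ 2 * ‖a‖ ^ 2) := by
  apply ofReal_injective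
  push_cast
  simp only [← mul_conj', map_add, map_mul, conj_conj]
  ring

end SchurStep

theorem schur_wronskian {γ : ℕ → ℂ} {A B At Bt : ℕ → ℂ → ℂ}
    (hA0 : ∀ z, A 0 z = conj (γ 0)) (hB0 : ∀ z, B 0 z = 1)
    (hAt0 : ∀ z, At 0 z = 1) (hBt0 : ∀ z, Bt 0 z = γ 0)
    (hA : ∀ k z, A (k + 1) z = z * A k z + conj (γ (k + 1)) * B k z)
    (hB : ∀ k z, B (k + 1) z = γ (k + 1) * z * A k z + B k z)
    (hAt : ∀ k z, At (k + 1) z = z * At k z + conj (γ (k + 1)) * Bt k z)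
    (hBt : ∀ k z, Bt (k + 1) z = γ (k + 1) * z * At k z + Bt k z) (m : ℕ) (z : ℂ) :
    At m z * B m z - A m z * Bt m z =
      z ^ m * ((∏ l ∈ range (m + 1), (1 - ‖γ l‖ ^ 2) : ℝ) : ℂ) := by
  induction m with
  | zero =>
    rw [hA0, hB0, hAt0, hBt0, prod_range_one]
    push_cast
    rw [← mul_conj']
    ring
  | succ k ih =>
    rw [hA, hB, hAt, hBt, schurStep_wronskian, ih, prod_range_succ _ (k + 1)]
    push_cast
    ring

theorem schur_denom_pos {γ : ℕ → ℂ} {A B : ℕ → ℂ → ℂ}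
    (hA0 : ∀ z, A 0 z = conj (γ 0)) (hB0 : ∀ z, B 0 z = 1)
    (hA : ∀ k z, A (k + 1) z = z * A k z + conj (γ (k + 1)) * B k z)
    (hB : ∀ k z, B (k + 1) z = γ (k + 1) * z * A k z + B k z)
    (hγ : ∀ l, ‖γ l‖ < 1) (m : ℕ) {z : ℂ} (hz : ‖z‖ < 1) :
    0 < ‖B m z‖ ^ 2 - ‖z‖ ^ 2 * ‖A m z‖ ^ 2 := by
  have hz2 : ‖z‖ ^ 2 < 1 := pow_lt_one₀ (norm_nonneg z) hz two_ne_zero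
  have hγ2 l : ‖γ l‖ ^ 2 < 1 := pow_lt_one₀ (norm_nonneg _) (hγ l) two_ne_zero
  induction m with
  | zero =>
    rw [hA0, hB0, norm_conj, norm_one]
    nlinarith [hγ2 0, sq_nonneg ‖γ 0‖]
  | succ k ih =>
    have hsplit : ‖B (k + 1) z‖ ^ 2 - ‖z‖ ^ 2 * ‖A (k + 1) z‖ ^ 2 =
        (1 - ‖γ (k + 1)‖ ^ 2) * (‖B k z‖ ^ 2 - ‖z‖ ^ 2 * ‖A k z‖ ^ 2) +
          (1 - ‖z‖ ^ 2) * ‖A (k + 1) z‖ ^ 2 := by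
      rw [← schurStep_sq_norm_sub, ← hA, ← hB]
      ring
    rw [hsplit]
    exact add_pos_of_pos_of_nonneg (mul_pos (sub_pos.mpr (hγ2 _)) ih)
      (mul_nonneg (sub_nonneg.mpr hz2.le) (sq_nonneg _))

theorem add_ne_zero_of_sq_norm_sub_pos {ε z a b : ℂ} (hε : ‖ε‖ = 1)
    (hD : 0 < ‖b‖ ^ 2 - ‖z‖ ^ 2 * ‖a‖ ^ 2) : b + ε * z * a ≠ 0 := by
  have hlt : ‖ε * z * a‖ < ‖b‖ := by
    rw [norm_mul, norm_mul, hε, one_mul, ← pow_lt_pow_iff_left₀ (by positivity) (norm_nonneg b)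
      two_ne_zero, mul_pow]
    linarith
  intro h
  rw [add_eq_zero_iff_eq_neg.mp h, norm_neg] at hlt
  exact lt_irrefl _ hlt

theorem extremal_sub_center_eq {n : ℕ} {P : ℝ} {ε z a b c d : ℂ} (hε : ‖ε‖ = 1)
    (hD : 0 < ‖b‖ ^ 2 - ‖z‖ ^ 2 * ‖a‖ ^ 2) (hW : c * b - a * d = z ^ n * P) :
    (ε * z * c + d) / (ε * z * a + b) -
        (conj b * d - ((‖z‖ : ℝ) : ℂ) ^ 2 * conj a * c) /
          ((‖b‖ ^ 2 - ‖z‖ ^ 2 * ‖a‖ ^ 2 : ℝ) : ℂ) =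
      (P : ℂ) * ((‖b + ε * z * a‖ ^ 2 : ℝ) : ℂ) / ((‖b‖ ^ 2 - ‖z‖ ^ 2 * ‖a‖ ^ 2 : ℝ) : ℂ) *
        (ε * z ^ (n + 1) / (b + ε * z * a) ^ 2) := by
  have hw := add_ne_zero_of_sq_norm_sub_pos hε hD
  have hDne : ((‖b‖ ^ 2 - ‖z‖ ^ 2 * ‖a‖ ^ 2 : ℝ) : ℂ) ≠ 0 := by exact_mod_cast hD.ne'
  have hεε : ε * conj ε = 1 := by rw [mul_conj', hε]; norm_num
  rw [add_comm _ b, div_sub_div _ _ hw hDne, div_mul_div_comm,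
    div_eq_div_iff (mul_ne_zero hw hDne) (mul_ne_zero hDne (pow_ne_zero 2 hw))]
  push_cast
  simp only [← mul_conj', map_add, map_mul]
  linear_combination (b * conj b - z * conj z * (a * conj a)) * (b + ε * z * a) ^ 2 *
    ((ε * z * conj b + z * conj z * conj a) * hW - z ^ (n + 1) * P * conj z * conj a * hεε)

theorem norm_boundary_term {n : ℕ} {P D : ℝ} {ε z w : ℂ} (hε : ‖ε‖ = 1) (hP : 0 ≤ P)
    (hD : 0 < D) (hw : w ≠ 0) :
    ‖(P : ℂ) * ((‖w‖ ^ 2 : ℝ) : ℂ) / (D : ℂ) * (ε * z ^ (n + 1) / w ^ 2)‖ =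
      ‖z‖ ^ (n + 1) * P / D := by
  have hw' : ‖w‖ ≠ 0 := norm_ne_zero_iff.mpr hw
  simp only [norm_mul, norm_div, norm_pow, norm_real, Real.norm_eq_abs, abs_of_nonneg hP,
    abs_of_pos hD, abs_norm, hε]
  field_simp

/-- The extremal functions `ω_{γ,ε}` (with `|ε| = 1`) attain the boundary of
the Schur value-region: `ω_{γ,ε}(z) − ρ(z)` has the stated explicit form and
in particular `|ω_{γ,ε}(z) − ρ(z)| = r(z)` on `𝔻`. -/
theorem stmt_16 (n : ℕ) (γ : ℕ → ℂ) (A B At Bt : ℕ → ℂ → ℂ)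
    (hA0 : ∀ z, A 0 z = (starRingEnd ℂ) (γ 0)) (hB0 : ∀ z, B 0 z = 1)
    (hAt0 : ∀ z, At 0 z = 1) (hBt0 : ∀ z, Bt 0 z = γ 0)
    (hA : ∀ k z, A (k + 1) z = z * A k z + (starRingEnd ℂ) (γ (k + 1)) * B k z)
    (hB : ∀ k z, B (k + 1) z = γ (k + 1) * z * A k z + B k z)
    (hAt : ∀ k z, At (k + 1) z = z * At k z + (starRingEnd ℂ) (γ (k + 1)) * Bt k z)
    (hBt : ∀ k z, Bt (k + 1) z = γ (k + 1) * z * At k z + Bt k z)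
    (hγ : ∀ l, ‖(γ l)‖ < 1)
    (ε : ℂ) (hε : ‖ε‖ = 1) :
    ∀ z ∈ Metric.ball (0 : ℂ) 1,
      (ε * z * At n z + Bt n z) / (ε * z * A n z + B n z) -
          ((starRingEnd ℂ) (B n z) * Bt n z -
              ((‖z‖ : ℝ) : ℂ) ^ 2 * (starRingEnd ℂ) (A n z) * At n z) /
            (((‖(B n z)‖ ^ 2 - ‖z‖ ^ 2 * ‖(A n z)‖ ^ 2 : ℝ)) : ℂ) =
        (((∏ l ∈ Finset.range (n + 1), (1 - ‖(γ l)‖ ^ 2) : ℝ)) : ℂ) *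
            (((‖(B n z + ε * z * A n z)‖ ^ 2 : ℝ)) : ℂ) /
            (((‖(B n z)‖ ^ 2 - ‖z‖ ^ 2 * ‖(A n z)‖ ^ 2 : ℝ)) : ℂ) *
            (ε * z ^ (n + 1) / (B n z + ε * z * A n z) ^ 2) ∧
      ‖((ε * z * At n z + Bt n z) / (ε * z * A n z + B n z) -
            ((starRingEnd ℂ) (B n z) * Bt n z -
                ((‖z‖ : ℝ) : ℂ) ^ 2 * (starRingEnd ℂ) (A n z) * At n z) /
              (((‖(B n z)‖ ^ 2 - ‖z‖ ^ 2 * ‖(A n z)‖ ^ 2 : ℝ)) : ℂ))‖ =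
        ‖z‖ ^ (n + 1) *
            (∏ l ∈ Finset.range (n + 1), (1 - ‖(γ l)‖ ^ 2)) /
          (‖(B n z)‖ ^ 2 - ‖z‖ ^ 2 * ‖(A n z)‖ ^ 2) := by
  intro z hz
  have hD := schur_denom_pos hA0 hB0 hA hB hγ n (mem_ball_zero_iff.mp hz)
  have hP : 0 ≤ ∏ l ∈ range (n + 1), (1 - ‖γ l‖ ^ 2) :=
    prod_nonneg fun l _ ↦ sub_nonneg.mpr (pow_le_one₀ (norm_nonneg _) (hγ l).le)
  have h := extremal_sub_center_eq hε hD (schur_wronskian hA0 hB0 hAt0 hBt0 hA hB hAt hBt n z)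
  exact ⟨h, h ▸ norm_boundary_term hε hP hD (add_ne_zero_of_sq_norm_sub_pos hε hD)⟩
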